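/- arXiv:2112.11355 — 3 statements merged into one kernel-verified Lean document; each statement's English description precedes it below -/
import Mathlib

section
/- Let K, D_k ∈ ℝ^{N×N} (k = 1,…,m), c_k ∈ ℝ^N, b_k ∈ ℝ, f ∈ ℝ^N, C ∈ ℝ^{m×N} with rows c_kᵀ, λ ∈ ℝ^m, and suppose S(λ) = K − Σ_k λ_k (D_k + D_kᵀ) is invertible. Set w(λ) = S(λ)⁻¹(f + Cᵀλ) and define F_k(λ) = w(λ)ᵀ D_k w(λ) + c_kᵀ w(λ) + b_k for k = 1,…,m. Then the pair (q, λ) satisfies the full KKT system — (i) Kq − f − (Σ_k λ_k (D_k + D_kᵀ))q − Cᵀλ = 0; (ii) qᵀD_k q + c_kᵀq + b_k ≥ 0 for all k; (iii) λ_k ≥ 0 for all k; (iv) Σ_k λ_k (qᵀD_k q + c_kᵀq + b_k) = 0 — if and only if q = w(λ) and λ solves the nonlinear complementarity problem: F_k(λ) ≥ 0 for all k, λ_k ≥ 0 for all k, and Σ_k λ_k F_k(λ) = 0. -/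
open scoped Matrix

/-- With `S(λ) = K − Σₖ λₖ(Dₖ + Dₖᵀ)` invertible,
`w(λ) = S(λ)⁻¹(f + Cᵀλ)` and `Fₖ(λ) = w(λ)ᵀDₖw(λ) + cₖᵀw(λ) + bₖ`, the pair `(q, λ)`
satisfies the full KKT system of the static contact problem iff `q = w(λ)` and `λ`
solves the nonlinear complementarity problem `F(λ) ≥ 0`, `λ ≥ 0`, `Σₖ λₖ Fₖ(λ) = 0`. -/
theorem static_kkt_iff_ncp
    {N m : ℕ}
    (K : Matrix (Fin N) (Fin N) ℝ)
    (D : Fin m → Matrix (Fin N) (Fin N) ℝ)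
    (c : Fin m → Fin N → ℝ) (b : Fin m → ℝ)
    (f : Fin N → ℝ)
    (C : Matrix (Fin m) (Fin N) ℝ) (hC : ∀ k, C k = c k)
    (lam : Fin m → ℝ)
    (S : Matrix (Fin N) (Fin N) ℝ)
    (hS : S = K - ∑ k, lam k • (D k + (D k)ᵀ))
    (hinv : IsUnit S.det)
    (w : Fin N → ℝ) (hw : w = S⁻¹.mulVec (f + Cᵀ.mulVec lam))
    (F : Fin m → ℝ)
    (hF : ∀ k, F k = w ⬝ᵥ (D k).mulVec w + c k ⬝ᵥ w + b k)
    (q : Fin N → ℝ) :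
    (K.mulVec q - f - (∑ k, lam k • (D k + (D k)ᵀ)).mulVec q - Cᵀ.mulVec lam = 0 ∧
      (∀ k, 0 ≤ q ⬝ᵥ (D k).mulVec q + c k ⬝ᵥ q + b k) ∧
      (∀ k, 0 ≤ lam k) ∧
      ∑ k, lam k * (q ⬝ᵥ (D k).mulVec q + c k ⬝ᵥ q + b k) = 0)
    ↔ (q = w ∧ (∀ k, 0 ≤ F k) ∧ (∀ k, 0 ≤ lam k) ∧ ∑ k, lam k * F k = 0) := by
  have hSw : S.mulVec w = f + Cᵀ.mulVec lam := by
    rw [hw, Matrix.mulVec_mulVec, Matrix.mul_nonsing_inv _ hinv, Matrix.one_mulVec]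
  have hrw : K.mulVec q - f - (∑ k, lam k • (D k + (D k)ᵀ)).mulVec q - Cᵀ.mulVec lam
      = S.mulVec q - (f + Cᵀ.mulVec lam) := by
    rw [hS, Matrix.sub_mulVec]; abel
  have hstat : K.mulVec q - f - (∑ k, lam k • (D k + (D k)ᵀ)).mulVec q - Cᵀ.mulVec lam = 0
      ↔ q = w := by
    rw [hrw, sub_eq_zero]
    constructor
    · intro hSq
      have := congrArg (S⁻¹.mulVec) (hSq.trans hSw.symm)
      rwa [Matrix.mulVec_mulVec, Matrix.mulVec_mulVec, Matrix.nonsing_inv_mul _ hinv,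
        Matrix.one_mulVec, Matrix.one_mulVec] at this
    · rintro rfl; exact hSw
  rw [hstat]
  constructor
  · rintro ⟨hq, h2, h3, h4⟩
    subst hq
    refine ⟨rfl, fun k => by rw [hF]; exact h2 k, h3, ?_⟩
    rw [← h4]; exact Finset.sum_congr rfl fun k _ => by rw [hF]
  · rintro ⟨hq, h2, h3, h4⟩
    subst hq
    refine ⟨rfl, fun k => by rw [← hF]; exact h2 k, h3, ?_⟩
    rw [← h4]; exact Finset.sum_congr rfl fun k _ => by rw [hF]
end

section
/- Let M, K, D_k ∈ ℝ^{N×N} (k = 1,…,m), c_k ∈ ℝ^N, b_k ∈ ℝ, C ∈ ℝ^{m×N} with rows c_kᵀ, h > 0, and let q⁰, q⁻, f⁺ ∈ ℝ^N be given (the two previous displacements and the new load). Let λ ∈ ℝ^m, set S(λ) = K − Σ_k λ_k (D_k + D_kᵀ), assume M + h²S(λ) is invertible, define w(λ) = (M + h²S(λ))⁻¹(h²f⁺ + h²Cᵀλ + 2Mq⁰ − Mq⁻) and F_k(λ) = w(λ)ᵀD_k w(λ) + c_kᵀw(λ) + b_k. Then the pair (q⁺, λ) satisfies the time-discretized KKT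 system — M(q⁺ − 2q⁰ + q⁻) + h²S(λ)q⁺ = h²f⁺ + h²Cᵀλ; (q⁺)ᵀD_k q⁺ + c_kᵀq⁺ + b_k ≥ 0 for all k; λ_k ≥ 0 for all k; Σ_k λ_k ((q⁺)ᵀD_k q⁺ + c_kᵀq⁺ + b_k) = 0 — if and only if q⁺ = w(λ) and λ solves the nonlinear complementarity problem λ ≥ 0, F(λ) ≥ 0, Σ_k λ_k F_k(λ) = 0. -/
open scoped Matrix

/-- In a time step of the implicit-Euler discretized dynamic contact
problem, with `S(λ) = K − Σₖ λₖ(Dₖ + Dₖᵀ)`, `M + h²S(λ)` invertible,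
`w(λ) = (M + h²S(λ))⁻¹(h²f⁺ + h²Cᵀλ + 2Mq⁰ − Mq⁻)` and
`Fₖ(λ) = w(λ)ᵀDₖw(λ) + cₖᵀw(λ) + bₖ`, the pair `(q⁺, λ)` satisfies the time-discretized
KKT system iff `q⁺ = w(λ)` and `λ` solves the NCP `λ ≥ 0`, `F(λ) ≥ 0`, `Σₖ λₖFₖ(λ) = 0`. -/
theorem dynamic_kkt_iff_ncp
    {N m : ℕ}
    (M K : Matrix (Fin N) (Fin N) ℝ)
    (D : Fin m → Matrix (Fin N) (Fin N) ℝ)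
    (c : Fin m → Fin N → ℝ) (b : Fin m → ℝ)
    (C : Matrix (Fin m) (Fin N) ℝ) (hC : ∀ k, C k = c k)
    (h : ℝ) (hh : 0 < h)
    (q0 qm fp : Fin N → ℝ)
    (lam : Fin m → ℝ)
    (S : Matrix (Fin N) (Fin N) ℝ)
    (hS : S = K - ∑ k, lam k • (D k + (D k)ᵀ))
    (hinv : IsUnit (M + h ^ 2 • S).det)
    (w : Fin N → ℝ)
    (hw : w = (M + h ^ 2 • S)⁻¹.mulVec
      (h ^ 2 • fp + h ^ 2 • Cᵀ.mulVec lam + (2 : ℝ) • M.mulVec q0 - M.mulVec qm))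
    (F : Fin m → ℝ)
    (hF : ∀ k, F k = w ⬝ᵥ (D k).mulVec w + c k ⬝ᵥ w + b k)
    (qp : Fin N → ℝ) :
    (M.mulVec (qp - (2 : ℝ) • q0 + qm) + h ^ 2 • S.mulVec qp
        = h ^ 2 • fp + h ^ 2 • Cᵀ.mulVec lam ∧
      (∀ k, 0 ≤ qp ⬝ᵥ (D k).mulVec qp + c k ⬝ᵥ qp + b k) ∧
      (∀ k, 0 ≤ lam k) ∧
      ∑ k, lam k * (qp ⬝ᵥ (D k).mulVec qp + c k ⬝ᵥ qp + b k) = 0)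
    ↔ (qp = w ∧ (∀ k, 0 ≤ F k) ∧ (∀ k, 0 ≤ lam k) ∧ ∑ k, lam k * F k = 0) := by

  set A := M + h ^ 2 • S with hA
  have hlin : (M.mulVec (qp - (2 : ℝ) • q0 + qm) + h ^ 2 • S.mulVec qp
        = h ^ 2 • fp + h ^ 2 • Cᵀ.mulVec lam) ↔ qp = w := by
    have hAw : A.mulVec w = h ^ 2 • fp + h ^ 2 • Cᵀ.mulVec lam
        + (2 : ℝ) • M.mulVec q0 - M.mulVec qm := by
      rw [hw, Matrix.mulVec_mulVec, Matrix.mul_nonsing_inv _ hinv, Matrix.one_mulVec]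
    haveI : Invertible A := A.invertibleOfIsUnitDet hinv
    have hAinj : Function.Injective A.mulVec := Matrix.mulVec_injective_of_invertible A
    constructor
    · intro heq
      apply hAinj
      rw [hAw]
      rw [Matrix.mulVec_add, Matrix.mulVec_sub, Matrix.mulVec_smul] at heq
      simp only [hA, Matrix.add_mulVec, Matrix.smul_mulVec]
      linear_combination (norm := (funext i; simp [Pi.add_apply, Pi.sub_apply, Pi.smul_apply]; ring)) heq
    · intro heq
      subst heq
      rw [Matrix.mulVec_add, Matrix.mulVec_sub, Matrix.mulVec_smul]
      have := hAw
      simp only [hA, Matrix.add_mulVec, Matrix.smul_mulVec] at this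
      linear_combination (norm := (funext i; simp [Pi.add_apply, Pi.sub_apply, Pi.smul_apply]; ring)) this
  constructor
  · rintro ⟨h1, h2, h3, h4⟩
    have hq : qp = w := hlin.mp h1
    subst hq
    exact ⟨rfl, fun k => (hF k) ▸ h2 k, h3, by rw [← h4]; exact Finset.sum_congr rfl fun k _ => by rw [hF k]⟩
  · rintro ⟨hq, h2, h3, h4⟩
    subst hq
    exact ⟨hlin.mpr rfl, fun k => (hF k) ▸ h2 k, h3, by rw [← h4]; exact Finset.sum_congr rfl fun k _ => by rw [hF k]⟩
end

section
/- Under the setup of the previous statement — A(λ) = M + h²(K − Σ_k λ_k (D_k + D_kᵀ)) invertible at λ, w(λ) = A(λ)⁻¹(h²f + h²Cᵀλ + r) — define F_i(λ) = w(λ)ᵀD_i w(λ) + c_iᵀw(λ) + b_i for i = 1,…,m and the vectors Z_k(λ) = (D_k + D_kᵀ)w(λ) + c_k ∈ ℝ^N. Then each F_i is differentiable at λ and the entries of its Jacobian are ∂F_i/∂λ_j (λ) = h² ⟨ Z_i(λ), A(λ)⁻¹ Z_j(λ) ⟩ for all i, j = 1,…,m; i.e. the Jacobian matrix is DF(λ)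 = h² Z A(λ)⁻¹ Zᵀ where Z ∈ ℝ^{m×N} has rows Z_k(λ)ᵀ. -/
open scoped Matrix

attribute [local instance] Matrix.linftyOpNormedRing Matrix.linftyOpNormedAlgebra

/-- `mulVec` as a continuous bilinear map. -/
noncomputable def mvCLM (N : ℕ) : Matrix (Fin N) (Fin N) ℝ →L[ℝ] (Fin N → ℝ) →L[ℝ] (Fin N → ℝ) :=
  LinearMap.toContinuousLinearMap
  { toFun := fun B => LinearMap.toContinuousLinearMap (Matrix.mulVecLin B)
    map_add' := by intros; ext v i; simp [Matrix.add_mulVec]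
    map_smul' := by intros; ext v i; simp [Matrix.smul_mulVec] }

@[simp] lemma mvCLM_apply (N : ℕ) (B : Matrix (Fin N) (Fin N) ℝ) (v : Fin N → ℝ) :
    mvCLM N B v = B.mulVec v := rfl

/-- `dotProduct` as a continuous bilinear map. -/
noncomputable def dpCLM (N : ℕ) : (Fin N → ℝ) →L[ℝ] (Fin N → ℝ) →L[ℝ] ℝ :=
  LinearMap.toContinuousLinearMap
  { toFun := fun v => LinearMap.toContinuousLinearMap
      { toFun := fun u => v ⬝ᵥ u
        map_add' := by intros; simp [dotProduct_add]
        map_smul' := by intros; simp [dotProduct_smul] }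
    map_add' := by intros; ext u; simp [add_dotProduct]
    map_smul' := by intros; ext u; simp [smul_dotProduct] }

@[simp] lemma dpCLM_apply (N : ℕ) (v u : Fin N → ℝ) : dpCLM N v u = v ⬝ᵥ u := rfl

/-- With `A(λ) = M + h²(K − Σₖ λₖ(Dₖ + Dₖᵀ))` invertible at `λ`,
`w(λ) = A(λ)⁻¹(h²f + h²Cᵀλ + r)`, `Fᵢ(λ) = w(λ)ᵀDᵢw(λ) + cᵢᵀw(λ) + bᵢ` and
`Zₖ(λ) = (Dₖ + Dₖᵀ)w(λ) + cₖ`, each `Fᵢ` is differentiable at `λ` and the Jacobian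
entries are `∂Fᵢ/∂λⱼ(λ) = h² ⟨Zᵢ(λ), A(λ)⁻¹Zⱼ(λ)⟩`, i.e. `DF(λ) = h² Z A(λ)⁻¹ Zᵀ`. -/
theorem dual_constraint_jacobian
    {N m : ℕ}
    (M K : Matrix (Fin N) (Fin N) ℝ)
    (D : Fin m → Matrix (Fin N) (Fin N) ℝ)
    (c : Fin m → Fin N → ℝ) (b : Fin m → ℝ)
    (C : Matrix (Fin m) (Fin N) ℝ) (hC : ∀ k, C k = c k)
    (h : ℝ) (hh : 0 < h)
    (r f : Fin N → ℝ)
    (A : (Fin m → ℝ) → Matrix (Fin N) (Fin N) ℝ)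
    (hA : ∀ μ, A μ = M + h ^ 2 • (K - ∑ k, μ k • (D k + (D k)ᵀ)))
    (w : (Fin m → ℝ) → Fin N → ℝ)
    (hw : ∀ μ, w μ = (A μ)⁻¹.mulVec (h ^ 2 • f + h ^ 2 • Cᵀ.mulVec μ + r))
    (lam : Fin m → ℝ) (hinv : IsUnit (A lam).det)
    (F : Fin m → (Fin m → ℝ) → ℝ)
    (hF : ∀ i μ, F i μ = w μ ⬝ᵥ (D i).mulVec (w μ) + c i ⬝ᵥ w μ + b i)
    (Z : Fin m → Fin N → ℝ)
    (hZ : ∀ k, Z k = (D k + (D k)ᵀ).mulVec (w lam) + c k) :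
    ∀ i, DifferentiableAt ℝ (F i) lam ∧
      ∀ j, fderiv ℝ (F i) lam (Pi.single j 1)
          = h ^ 2 * (Z i ⬝ᵥ (A lam)⁻¹.mulVec (Z j)) := by
  classical
  have hu : IsUnit (A lam) := (Matrix.isUnit_iff_isUnit_det _).mpr hinv
  set u : (Matrix (Fin N) (Fin N) ℝ)ˣ := hu.unit with hu_def
  -- the linear part of `A`
  set L : (Fin m → ℝ) →ₗ[ℝ] Matrix (Fin N) (Fin N) ℝ :=
    { toFun := fun v => -(h ^ 2 • ∑ k, v k • (D k + (D k)ᵀ))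
      map_add' := by
        intros x y
        have hs : (∑ k, (x + y) k • (D k + (D k)ᵀ))
            = (∑ k, x k • (D k + (D k)ᵀ)) + ∑ k, y k • (D k + (D k)ᵀ) := by
          rw [← Finset.sum_add_distrib]
          exact Finset.sum_congr rfl fun k _ => by rw [Pi.add_apply, add_smul]
        rw [hs, smul_add, neg_add]
      map_smul' := by
        intros a x
        have hs : (∑ k, (a • x) k • (D k + (D k)ᵀ)) = a • ∑ k, x k • (D k + (D k)ᵀ) := by
          rw [Finset.smul_sum]
          exact Finset.sum_congr rfl fun k _ => by
            rw [Pi.smul_apply, smul_eq_mul, ← smul_smul]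
        simp only [RingHom.id_apply]
        rw [hs, smul_comm (h ^ 2) a, ← smul_neg] } with hL_def
  -- the linear part of the affine right-hand side
  set G : (Fin m → ℝ) →ₗ[ℝ] (Fin N → ℝ) :=
    { toFun := fun v => h ^ 2 • Cᵀ.mulVec v
      map_add' := by intros; simp [Matrix.mulVec_add, smul_add]
      map_smul' := by intros a x; simp [Matrix.mulVec_smul, smul_comm a (h ^ 2)] } with hG_def
  have hHA : HasFDerivAt A L.toContinuousLinearMap lam := by
    have hAeq : A = fun μ => (M + h ^ 2 • K) + L.toContinuousLinearMap μ := by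
      funext μ
      rw [hA μ]
      show _ = (M + h ^ 2 • K) + -(h ^ 2 • ∑ k, μ k • (D k + (D k)ᵀ))
      rw [smul_sub]
      abel
    rw [hAeq]
    exact L.toContinuousLinearMap.hasFDerivAt.const_add _
  -- derivative of the inverse
  set B : (Fin m → ℝ) → Matrix (Fin N) (Fin N) ℝ := fun μ => Ring.inverse (A μ) with hB_def
  set B' : (Fin m → ℝ) →L[ℝ] Matrix (Fin N) (Fin N) ℝ :=
    (-(ContinuousLinearMap.mulLeftRight ℝ _ ↑u⁻¹ ↑u⁻¹)).comp L.toContinuousLinearMap with hB'_def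
  have hHB : HasFDerivAt B B' lam := by
    have h1 := hasFDerivAt_ringInverse (𝕜 := ℝ) u
    rw [hu.unit_spec] at h1
    exact h1.comp lam hHA
  have hHg : HasFDerivAt (fun μ : Fin m → ℝ => h ^ 2 • f + h ^ 2 • Cᵀ.mulVec μ + r)
      G.toContinuousLinearMap lam :=
    (G.toContinuousLinearMap.hasFDerivAt.const_add (h ^ 2 • f)).add_const r
  -- derivative of w
  set Wd : (Fin m → ℝ) →L[ℝ] (Fin N → ℝ) :=
    (mvCLM N (B lam)).comp G.toContinuousLinearMap + ((mvCLM N).comp B').flip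
      (h ^ 2 • f + h ^ 2 • Cᵀ.mulVec lam + r) with hWd_def
  have hHw : HasFDerivAt w Wd lam := by
    have hc : HasFDerivAt (fun μ => mvCLM N (B μ)) ((mvCLM N).comp B') lam :=
      (mvCLM N).hasFDerivAt.comp lam hHB
    have h2 := hc.clm_apply hHg
    have hwE : w = fun μ => mvCLM N (B μ) (h ^ 2 • f + h ^ 2 • Cᵀ.mulVec μ + r) := by
      funext μ
      rw [hw μ, Matrix.nonsing_inv_eq_ringInverse]
      rfl
    rw [hwE]
    exact h2
  have hu_inv : (↑u⁻¹ : Matrix (Fin N) (Fin N) ℝ) = (A lam)⁻¹ := by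
    rw [Matrix.nonsing_inv_eq_ringInverse, ← hu.unit_spec, Ring.inverse_unit]
  have hBlam : B lam = (A lam)⁻¹ := by
    rw [hB_def, Matrix.nonsing_inv_eq_ringInverse]
  intro i
  set Φ : (Fin m → ℝ) →L[ℝ] ℝ :=
    ((dpCLM N (w lam)).comp ((mvCLM N (D i)).comp Wd)
      + ((dpCLM N).comp Wd).flip (mvCLM N (D i) (w lam)))
      + (dpCLM N (c i)).comp Wd with hPhi_def
  have hHF : HasFDerivAt (F i) Φ lam := by
    have h1 : HasFDerivAt (fun μ => dpCLM N (w μ)) ((dpCLM N).comp Wd) lam :=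
      (dpCLM N).hasFDerivAt.comp lam hHw
    have h2 : HasFDerivAt (fun μ => mvCLM N (D i) (w μ)) ((mvCLM N (D i)).comp Wd) lam :=
      (mvCLM N (D i)).hasFDerivAt.comp lam hHw
    have h3 := h1.clm_apply h2
    have h4 : HasFDerivAt (fun μ => dpCLM N (c i) (w μ)) ((dpCLM N (c i)).comp Wd) lam :=
      (dpCLM N (c i)).hasFDerivAt.comp lam hHw
    have h5 := (h3.add h4).add_const (b i)
    have hFeq : F i = fun μ =>
        (dpCLM N (w μ) (mvCLM N (D i) (w μ)) + dpCLM N (c i) (w μ)) + b i := by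
      funext μ
      rw [hF i μ]
      simp
    rw [hFeq]
    exact h5
  refine ⟨hHF.differentiableAt, fun j => ?_⟩
  rw [hHF.fderiv]
  -- evaluate the derivative in direction `Pi.single j 1`
  have hS : (∑ k, (Pi.single j (1:ℝ) : Fin m → ℝ) k • (D k + (D k)ᵀ)) = D j + (D j)ᵀ := by
    rw [Finset.sum_eq_single j]
    · simp
    · intro k _ hk
      simp [Pi.single_eq_of_ne hk]
    · simp
  have hcol : Cᵀ.mulVec (Pi.single j (1:ℝ)) = c j := by
    rw [Matrix.mulVec_single_one, ← hC]
    rfl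
  have hWdv : Wd (Pi.single j 1) = h ^ 2 • (A lam)⁻¹.mulVec (Z j) := by
    have hGv : G.toContinuousLinearMap (Pi.single j (1:ℝ)) = h ^ 2 • c j := by
      show h ^ 2 • Cᵀ.mulVec (Pi.single j 1) = _
      rw [hcol]
    have hLv : L.toContinuousLinearMap (Pi.single j (1:ℝ)) = -(h ^ 2 • (D j + (D j)ᵀ)) := by
      show -(h ^ 2 • ∑ k, (Pi.single j (1:ℝ) : Fin m → ℝ) k • (D k + (D k)ᵀ)) = _
      rw [hS]
    have hB'v : B' (Pi.single j 1)
        = h ^ 2 • ((A lam)⁻¹ * (D j + (D j)ᵀ) * (A lam)⁻¹) := by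
      show -(ContinuousLinearMap.mulLeftRight ℝ _ ↑u⁻¹ ↑u⁻¹)
          (L.toContinuousLinearMap (Pi.single j 1)) = _
      rw [hLv]
      simp only [ContinuousLinearMap.neg_apply, ContinuousLinearMap.mulLeftRight_apply,
        hu_inv, mul_neg, neg_mul, neg_neg, Matrix.mul_smul, Matrix.smul_mul]
    have hwlam : (A lam)⁻¹.mulVec (h ^ 2 • f + h ^ 2 • Cᵀ.mulVec lam + r) = w lam :=
      (hw lam).symm
    rw [hWd_def]
    simp only [ContinuousLinearMap.add_apply, ContinuousLinearMap.coe_comp',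
      Function.comp_apply, ContinuousLinearMap.flip_apply, mvCLM_apply]
    rw [hGv, hB'v, hBlam, hZ j]
    rw [Matrix.mulVec_smul, Matrix.smul_mulVec, ← Matrix.mulVec_mulVec,
      ← Matrix.mulVec_mulVec, hwlam, Matrix.mulVec_add, smul_add]
    exact add_comm _ _
  simp only [hPhi_def, ContinuousLinearMap.add_apply, ContinuousLinearMap.coe_comp',
    Function.comp_apply, ContinuousLinearMap.flip_apply, mvCLM_apply, dpCLM_apply]
  rw [hWdv, hZ i]
  set q : Fin N → ℝ := (A lam)⁻¹.mulVec (Z j) with hq_def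
  rw [dotProduct_smul]
  have key : w lam ⬝ᵥ (D i).mulVec q + q ⬝ᵥ (D i).mulVec (w lam) + c i ⬝ᵥ q
      = ((D i + (D i)ᵀ).mulVec (w lam) + c i) ⬝ᵥ q := by
    rw [add_dotProduct, Matrix.add_mulVec, add_dotProduct]
    rw [Matrix.dotProduct_mulVec (w lam) (D i) q, ← Matrix.mulVec_transpose,
      dotProduct_comm q ((D i).mulVec (w lam))]
    ring
  rw [Matrix.mulVec_smul, dotProduct_smul, smul_dotProduct, ← key]
  simp only [smul_eq_mul]
  ring
end
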